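/- Let δ_{2m} (m ≥ 1) be the derivation of the free Lie algebra L(T,A) defined by δ_{2m}(T) = -ad_T^{2m}(A) and δ_{2m}(A) = Σ_{j>k≥0, j+k=2m-1} (-1)^{j+1}[ad_T^j(A), ad_T^k(A)]. Then δ_{2m}([T,A]) = 0. -/

import Mathlib

/-!
Write `x j = ad_T^j A`. By the Leibniz rule `[T, [x j, x k]] = [x (j+1), x k] + [x j, x (k+1)]`,
so with `h j = (-1)^j [x j, x (2m-j)]` the `j`-th summand of `[T, δ A]` is `h (j+1) - h j`.
The sum over `m ≤ j < 2m` telescopes to `h (2m) - h m = [x (2m), A]`, since `h m = ±[x m, x m] = 0`,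
and this cancels `[δ T, A] = -[x (2m), A]`.
-/

open scoped BigOperators

noncomputable section

namespace Stmt15

abbrev L := FreeLieAlgebra ℚ (Fin 2)

def T : L := FreeLieAlgebra.of ℚ 0

def A : L := FreeLieAlgebra.of ℚ 1

def ad : Module.End ℚ L := LieAlgebra.ad ℚ L T

end Stmt15

open Finset

theorem Finset.Nat.sum_antidiagonal_two_mul_sub_one_filter_snd_lt {M : Type*} [AddCommMonoid M]
    (m : ℕ) (f : ℕ × ℕ → M) :
    ∑ p ∈ (antidiagonal (2 * m - 1)).filter (fun p => p.2 < p.1), f p =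
      ∑ j ∈ Ico m (2 * m), f (j, 2 * m - 1 - j) := by
  refine sum_nbij' Prod.fst (fun j => (j, 2 * m - 1 - j)) ?_ ?_ ?_ ?_ ?_ <;>
    simp only [mem_filter, HasAntidiagonal.mem_antidiagonal, mem_Ico, Prod.forall,
      Prod.mk.injEq, true_and, implies_true]
  · intro a b; omega
  · intro a; omega
  · intro a b; omega
  · rintro a b ⟨hab, -⟩
    rw [← hab, Nat.add_sub_cancel_left]

section AdPow

variable {R L : Type*} [CommRing R] [LieRing L] [LieAlgebra R L]

theorem lie_lie_ad_pow (t a : L) (j k : ℕ) :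
    ⁅t, ⁅(LieAlgebra.ad R L t ^ j) a, (LieAlgebra.ad R L t ^ k) a⁆⁆ =
      ⁅(LieAlgebra.ad R L t ^ (j + 1)) a, (LieAlgebra.ad R L t ^ k) a⁆ +
        ⁅(LieAlgebra.ad R L t ^ j) a, (LieAlgebra.ad R L t ^ (k + 1)) a⁆ := by
  rw [pow_succ', pow_succ', Module.End.mul_apply, Module.End.mul_apply, LieAlgebra.ad_apply,
    LieAlgebra.ad_apply, leibniz_lie]

theorem lie_sum_alternating_lie_ad_pow (t a : L) (m : ℕ) :
    ⁅t, ∑ j ∈ Ico m (2 * m),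
        (-1 : R) ^ (j + 1) • ⁅(LieAlgebra.ad R L t ^ j) a, (LieAlgebra.ad R L t ^ (2 * m - 1 - j)) a⁆⁆ =
      ⁅(LieAlgebra.ad R L t ^ (2 * m)) a, a⁆ := by
  set x : ℕ → L := fun j => (LieAlgebra.ad R L t ^ j) a
  set h : ℕ → L := fun j => (-1 : R) ^ j • ⁅x j, x (2 * m - j)⁆
  have summand : ∀ j ∈ Ico m (2 * m),
      ⁅t, (-1 : R) ^ (j + 1) • ⁅x j, x (2 * m - 1 - j)⁆⁆ = h (j + 1) - h j := by
    intro j hj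
    have hj_lt : j < 2 * m := (mem_Ico.mp hj).2
    rw [lie_smul, lie_lie_ad_pow, smul_add, show 2 * m - 1 - j + 1 = 2 * m - j by omega,
      show 2 * m - 1 - j = 2 * m - (j + 1) by omega, sub_eq_add_neg]
    congr 1
    rw [pow_succ, mul_neg_one, neg_smul]
  rw [lie_sum, sum_congr rfl summand, sum_Ico_sub h (by omega)]
  simp only [h, x, show 2 * m - m = m by omega, Nat.sub_self, lie_self, smul_zero, sub_zero,
    pow_zero, Module.End.one_apply, pow_mul, neg_one_sq, one_pow, one_smul]

end AdPow

namespace Stmt15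

theorem delta_annihilates_bracket_general (m : ℕ) (D : LieDerivation ℚ L L)
    (hT : D T = -((ad ^ (2 * m)) A))
    (hA : D A = ∑ p ∈ (Finset.HasAntidiagonal.antidiagonal (2 * m - 1)).filter (fun p => p.2 < p.1),
        ((-1 : ℚ) ^ (p.1 + 1)) • ⁅(ad ^ p.1) A, (ad ^ p.2) A⁆) :
    D ⁅T, A⁆ = 0 := by
  rw [D.apply_lie_eq_add, hT, hA, Finset.Nat.sum_antidiagonal_two_mul_sub_one_filter_snd_lt, ad,
    lie_sum_alternating_lie_ad_pow, neg_lie, add_neg_cancel]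

/-- For `m ≥ 1`, the derivation `δ_{2m}` of the free Lie algebra `L(T,A)` determined by
`δ_{2m}(T) = -ad_T^{2m}(A)` and
`δ_{2m}(A) = ∑_{j>k≥0, j+k=2m-1} (-1)^{j+1} [ad_T^j(A), ad_T^k(A)]`
annihilates `[T,A]`. -/
theorem delta_annihilates_bracket (m : ℕ) (hm : 1 ≤ m) (D : LieDerivation ℚ L L)
    (hT : D T = -((ad ^ (2 * m)) A))
    (hA : D A = ∑ p ∈ (Finset.HasAntidiagonal.antidiagonal (2 * m - 1)).filter (fun p => p.2 < p.1),
        ((-1 : ℚ) ^ (p.1 + 1)) • ⁅(ad ^ p.1) A, (ad ^ p.2) A⁆) :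
    D ⁅T, A⁆ = 0 :=
  delta_annihilates_bracket_general m D hT hA

end Stmt15
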